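/- If an action functional S is invariant under a group G acting on field space, then truncation to the G-invariant sector is consistent: at any G-fixed field configuration, the variation of S with respect to any field direction transforming in a nontrivial G-representation (i.e., lying in a complement of the fixed subspace with no invariant component) vanishes automatically once the equations of motion within the invariant sector hold. Concretely, in a finite-dimensional model: let S : V → ℝ be smooth, let a compact group G act linearly on V with S(g·v) = S(v) for all g, v, and decompose V = V^G ⊕ W with W a G-invariant complement containing no nonzero G-fixed vectors; then for any p ∈ V^G, the differential dS_p vanishes on W. -/

import Mathlib

open MeasureTheory


/- STATEMENT 6: consistency of truncation to the G-invariant sector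
(finite-dimensional model).  S : V → ℝ is smooth and invariant under a linear
action of a compact group G; V = V^G ⊕ W with W a G-invariant complement with no
nonzero fixed vectors.  Then at any G-fixed point p, the differential dS_p
vanishes on W. -/

theorem invariant_truncation_consistent
    {V : Type*} [NormedAddCommGroup V] [NormedSpace ℝ V] [FiniteDimensional ℝ V]
    {G : Type*} [Group G] [TopologicalSpace G] [IsTopologicalGroup G] [CompactSpace G]
    (ρ : Representation ℝ G V) (hρcont : ∀ v : V, Continuous fun g : G => ρ g v)
    (S : V → ℝ) (hS : ContDiff ℝ (⊤ : ℕ∞) S)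
    (hinv : ∀ (g : G) (v : V), S (ρ g v) = S v)
    (W : Submodule ℝ V)
    (hcompl : IsCompl (Submodule.span ℝ {v : V | ∀ g : G, ρ g v = v} : Submodule ℝ V) W)
    (hWinv : ∀ (g : G), ∀ w ∈ W, ρ g w ∈ W)
    (hWnofix : ∀ w ∈ W, (∀ g : G, ρ g w = w) → w = 0)
    (p : V) (hp : ∀ g : G, ρ g p = p) :
    ∀ w ∈ W, fderiv ℝ S p w = 0 := by
  intro w hw
  borelize G
  -- normalized Haar measure on G
  let K₀ : TopologicalSpace.PositiveCompacts G := ⟨⟨Set.univ, isCompact_univ⟩, by simp⟩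
  let μ : Measure G := Measure.haarMeasure K₀
  haveI : IsProbabilityMeasure μ := ⟨Measure.haarMeasure_self⟩
  haveI : μ.IsMulLeftInvariant := inferInstance
  set φ : V →L[ℝ] ℝ := fderiv ℝ S p with hφdef
  -- invariance of the differential
  have hφinv : ∀ (g : G) (v : V), φ (ρ g v) = φ v := by
    intro g v
    let L : V →L[ℝ] V := LinearMap.toContinuousLinearMap (ρ g)
    have hcomp : S ∘ L = S := funext fun u => hinv g u
    have hd : fderiv ℝ (S ∘ L) p = (fderiv ℝ S (L p)).comp (L : V →L[ℝ] V) := by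
      rw [fderiv_comp p ((hS.differentiable (by simp)).differentiableAt) L.differentiableAt,
        L.fderiv]
    have hLp : L p = p := hp g
    have : φ = φ.comp (L : V →L[ℝ] V) := by
      rw [hφdef, ← hLp, ← hd, hcomp, hLp]
    calc φ (ρ g v) = φ.comp (L : V →L[ℝ] V) v := rfl
      _ = φ v := by rw [← this]
  -- integrability
  have hcont : Continuous fun g : G => ρ g w := hρcont w
  have hint : Integrable (fun g : G => ρ g w) μ := hcont.integrable_of_hasCompactSupport
    (HasCompactSupport.of_compactSpace _)
  -- averaged vector
  set wbar : V := ∫ g, ρ g w ∂μ with hwbar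
  -- wbar ∈ W
  have hmem : wbar ∈ W := by
    let f : G → W := fun g => ⟨ρ g w, hWinv g w hw⟩
    have hfc : Continuous f := Continuous.subtype_mk hcont _
    have hfint : Integrable f μ := hfc.integrable_of_hasCompactSupport
      (HasCompactSupport.of_compactSpace _)
    have hkey : (∫ g, W.subtypeL (f g) ∂μ) = W.subtypeL (∫ g, f g ∂μ) :=
      W.subtypeL.integral_comp_comm hfint
    have : wbar = W.subtypeL (∫ g, f g ∂μ) := by rw [hwbar, ← hkey]; rfl
    rw [this]
    exact (∫ g, f g ∂μ).2
  -- wbar is fixed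
  have hfix : ∀ g : G, ρ g wbar = wbar := by
    intro g₀
    let L : V →L[ℝ] V := LinearMap.toContinuousLinearMap (ρ g₀)
    have h1 : ρ g₀ wbar = ∫ g, ρ g₀ (ρ g w) ∂μ :=
      (ContinuousLinearMap.integral_comp_comm L hint).symm
    have h2 : (fun g : G => ρ g₀ (ρ g w)) = fun g : G => ρ (g₀ * g) w := by
      funext g; rw [map_mul]; rfl
    rw [h1, h2]
    exact integral_mul_left_eq_self (fun g : G => ρ g w) g₀
  have hzero : wbar = 0 := hWnofix wbar hmem hfix
  -- φ w = φ wbar = 0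
  have : φ wbar = φ w := by
    rw [hwbar, ← ContinuousLinearMap.integral_comp_comm φ hint]
    simp [hφinv]
  rw [← this, hzero, map_zero]
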